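/- For every natural number k' ≥ 1, the t = -1 specialization of the conjectured Khovanov-Rozansky Poincaré polynomial of T(2,2k') equals the HOMFLY polynomial: q^{-N-2k'+1}·[N] + Σ_{l=1}^{k'-1} ( -q^{N+4l-2k'}·[N-1] + q^{-N+4l-2k'}·[N-1] ) + q^{2k'-1}·[N][N-1] = q^{-2k'}·s_2 + q^{2k'}·s_{11}. -/

import Mathlib

open scoped BigOperators

noncomputable def q : RatFunc ℚ := RatFunc.X

/-- Quantum integer `[n] = (q^n - q^{-n})/(q - q^{-1})`. -/
noncomputable def qi (n : ℤ) : RatFunc ℚ := (q ^ n - q ^ (-n)) / (q - q ^ (-1 : ℤ))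

/-- `s_2 = [N][N+1]/[2]`. -/
noncomputable def s2 (N : ℕ) : RatFunc ℚ := qi N * qi ((N : ℤ) + 1) / qi 2

/-- `s_{11} = [N][N-1]/[2]`. -/
noncomputable def s11 (N : ℕ) : RatFunc ℚ := qi N * qi ((N : ℤ) - 1) / qi 2

/-- HOMFLY polynomial of the torus knot/link `T(2,k)`. -/
noncomputable def H (N : ℕ) (k : ℤ) : RatFunc ℚ := q ^ (-k) * s2 N + (-q) ^ k * s11 N

/-!
The middle terms of the Euler characteristic combine to `-(q - q⁻¹)[N][N-1] Σ q^(4l-2k')`, and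
`[2] Σ_{l=1}^{k'-1} q^(4l-2k') = [2k'-2]` is a geometric sum. After multiplying by `[2]`, what remains is the
recursion `[N+1] = q²[N-1] + q^(1-N)[2]`.
-/

open Finset Polynomial

lemma q_ne_zero : q ≠ 0 := RatFunc.X_ne_zero

lemma q_pow_ne_one {n : ℕ} (hn : n ≠ 0) : q ^ n ≠ 1 := by
  have : (X ^ n - 1 : ℚ[X]) ≠ 0 := X_pow_sub_C_ne_zero (Nat.pos_of_ne_zero hn) 1
  simpa [q, sub_eq_zero] using (map_ne_zero_iff _ (IsFractionRing.injective ℚ[X] (RatFunc ℚ))).2 this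

lemma q_sub_inv_ne_zero : q - q⁻¹ ≠ 0 := by
  intro h
  have : q ^ 2 = 1 := by
    field_simp [q_ne_zero] at h
    linear_combination h
  exact q_pow_ne_one two_ne_zero this

lemma q_sub_inv_mul_qi (n : ℤ) : (q - q⁻¹) * qi n = q ^ n - q ^ (-n) := by
  rw [qi, zpow_neg_one, mul_div_cancel₀ _ q_sub_inv_ne_zero]

lemma qi_two : qi 2 = q + q⁻¹ := by
  apply mul_left_cancel₀ q_sub_inv_ne_zero
  rw [q_sub_inv_mul_qi, zpow_neg, zpow_ofNat, ← inv_pow]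
  ring

lemma qi_two_ne_zero : qi 2 ≠ 0 := by
  rw [qi_two]
  intro h
  have : q ^ 4 = 1 := by
    field_simp [q_ne_zero] at h
    linear_combination (q ^ 2 - 1) * h
  exact q_pow_ne_one four_ne_zero this

lemma qi_add_one (n : ℤ) : qi (n + 1) = q * qi n + q ^ (-n) := by
  apply mul_left_cancel₀ q_sub_inv_ne_zero
  rw [mul_add, mul_left_comm, q_sub_inv_mul_qi, q_sub_inv_mul_qi, neg_add, zpow_add₀ q_ne_zero,
    zpow_add₀ q_ne_zero]
  simp only [zpow_one, zpow_neg]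
  ring

lemma qi_add_one_eq_sq_mul_qi_sub_one (n : ℤ) :
    qi (n + 1) = q ^ 2 * qi (n - 1) + q ^ (1 - n) * qi 2 := by
  have h := qi_add_one (n - 1)
  rw [sub_add_cancel] at h
  rw [qi_add_one, h, qi_two, neg_sub, zpow_sub₀ q_ne_zero, zpow_neg, zpow_one]
  linear_combination -(q ^ n)⁻¹ * mul_inv_cancel₀ q_ne_zero

lemma sum_Icc_zpow_mul_qi_two {k : ℕ} (hk : 1 ≤ k) :
    (∑ l ∈ Icc 1 (k - 1), q ^ (4 * (l : ℤ) - 2 * k)) * qi 2 = qi (2 * k - 2) := by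
  have hgeom : (∑ l ∈ Icc 1 (k - 1), (q ^ 4) ^ l) * (q ^ 4 - 1) = ((q ^ 2) ^ k) ^ 2 - q ^ 4 := by
    rw [Icc_sub_one_right_eq_Ico_of_not_isMin (by simpa using Nat.one_le_iff_ne_zero.mp hk),
      geom_sum_Ico_mul _ hk]
    ring
  have hfactor : ∑ l ∈ Icc 1 (k - 1), q ^ (4 * (l : ℤ) - 2 * k)
      = ((q ^ 2) ^ k)⁻¹ * ∑ l ∈ Icc 1 (k - 1), (q ^ 4) ^ l := by
    rw [mul_sum]
    refine sum_congr rfl fun l _ => ?_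
    rw [zpow_sub₀ q_ne_zero, zpow_mul, zpow_mul]
    simp only [zpow_natCast, zpow_ofNat]
    ring
  apply mul_left_cancel₀ q_sub_inv_ne_zero
  rw [q_sub_inv_mul_qi, qi_two, hfactor]
  simp only [zpow_sub₀ q_ne_zero, neg_sub, zpow_mul, zpow_natCast, zpow_ofNat]
  field_simp
  congr 1
  linear_combination hgeom

lemma khr_middle_sum_mul_qi_two (N : ℕ) {k : ℕ} (hk : 1 ≤ k) :
    (∑ l ∈ Icc 1 (k - 1),
        (-q ^ ((N : ℤ) + 4 * (l : ℤ) - 2 * (k : ℤ)) * qi ((N : ℤ) - 1)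
          + q ^ (-(N : ℤ) + 4 * (l : ℤ) - 2 * (k : ℤ)) * qi ((N : ℤ) - 1))) * qi 2
      = -(qi N * qi ((N : ℤ) - 1)) * (q ^ (2 * (k : ℤ) - 2) - q ^ (-(2 * (k : ℤ) - 2))) := by
  have hterm (l : ℕ) :
      -q ^ ((N : ℤ) + 4 * (l : ℤ) - 2 * (k : ℤ)) * qi ((N : ℤ) - 1)
          + q ^ (-(N : ℤ) + 4 * (l : ℤ) - 2 * (k : ℤ)) * qi ((N : ℤ) - 1)
        = -((q - q⁻¹) * qi N * qi ((N : ℤ) - 1)) * q ^ (4 * (l : ℤ) - 2 * k) := by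
    rw [q_sub_inv_mul_qi, add_sub_assoc, add_sub_assoc, zpow_add₀ q_ne_zero, zpow_add₀ q_ne_zero]
    ring
  rw [sum_congr rfl fun l _ => hterm l, ← mul_sum, mul_assoc, sum_Icc_zpow_mul_qi_two hk,
    ← q_sub_inv_mul_qi]
  ring

theorem khr_T2even_euler_general (N : ℕ) (k' : ℕ) (hk : 1 ≤ k') :
    q ^ (-(N : ℤ) - 2 * (k' : ℤ) + 1) * qi N
      + (∑ l ∈ Finset.Icc 1 (k' - 1),
          (-q ^ ((N : ℤ) + 4 * (l : ℤ) - 2 * (k' : ℤ)) * qi ((N : ℤ) - 1)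
            + q ^ (-(N : ℤ) + 4 * (l : ℤ) - 2 * (k' : ℤ)) * qi ((N : ℤ) - 1)))
      + q ^ (2 * (k' : ℤ) - 1) * qi N * qi ((N : ℤ) - 1)
    = q ^ (-2 * (k' : ℤ)) * s2 N + q ^ (2 * (k' : ℤ)) * s11 N := by
  apply mul_right_cancel₀ qi_two_ne_zero
  rw [add_mul, add_mul, khr_middle_sum_mul_qi_two N hk, s2, s11, add_mul, mul_assoc _ (_ / _),
    mul_assoc (q ^ _) (_ / _), div_mul_cancel₀ _ qi_two_ne_zero, div_mul_cancel₀ _ qi_two_ne_zero,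
    qi_add_one_eq_sq_mul_qi_sub_one, qi_two]
  simp only [zpow_add₀ q_ne_zero, zpow_sub₀ q_ne_zero, zpow_neg, zpow_mul, zpow_natCast,
    zpow_ofNat, pow_one, inv_pow]
  field_simp [q_ne_zero]
  ring

theorem khr_T2even_euler (N : ℕ) (hN : 1 ≤ N) (k' : ℕ) (hk : 1 ≤ k') :
    q ^ (-(N : ℤ) - 2 * (k' : ℤ) + 1) * qi N
      + (∑ l ∈ Finset.Icc 1 (k' - 1),
          (-q ^ ((N : ℤ) + 4 * (l : ℤ) - 2 * (k' : ℤ)) * qi ((N : ℤ) - 1)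
            + q ^ (-(N : ℤ) + 4 * (l : ℤ) - 2 * (k' : ℤ)) * qi ((N : ℤ) - 1)))
      + q ^ (2 * (k' : ℤ) - 1) * qi N * qi ((N : ℤ) - 1)
    = q ^ (-2 * (k' : ℤ)) * s2 N + q ^ (2 * (k' : ℤ)) * s11 N :=
  khr_T2even_euler_general N k' hk
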